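/- For any Mockingbird terms t and t', one has t ≼ t' if and only if at least one of the following holds: (i) t = M = t'; (ii) t = x_i = t' for some variable x_i; (iii) t = (t1 ⋆ t2), t' = (t1' ⋆ t2') with t1 ≼ t1' and t2 ≼ t2'; (iv) t = (M ⋆ t2), t' = (t1' ⋆ t2') with t2 ≼ t1' and t2 ≼ t2'. -/

import Mathlib

/-- Mockingbird terms: the constant `M`, variables `x i`, and applications. -/
inductive MTerm : Type
  | M : MTerm
  | var : ℕ → MTerm
  | app : MTerm → MTerm → MTerm
  deriving DecidableEq

/-- The one-step rewrite relation `⇒` on Mockingbird terms. -/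
inductive Step : MTerm → MTerm → Prop
  | mock (t : MTerm) : Step (MTerm.app MTerm.M t) (MTerm.app t t)
  | left {t1 t1' : MTerm} (t2 : MTerm) :
      Step t1 t1' → Step (MTerm.app t1 t2) (MTerm.app t1' t2)
  | right (t1 : MTerm) {t2 t2' : MTerm} :
      Step t2 t2' → Step (MTerm.app t1 t2) (MTerm.app t1 t2')

/-- `≼`, the reflexive-transitive closure of `⇒`. -/
def MLe : MTerm → MTerm → Prop := Relation.ReflTransGen Step

/-- `≡`, the reflexive-symmetric-transitive closure of `⇒`. -/
def MEquiv : MTerm → MTerm → Prop := Relation.EqvGen Step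

/-- Strict version of `≼`. -/
def MLt (s t : MTerm) : Prop := MLe s t ∧ s ≠ t

/-- Covering relation for `≼`. -/
def MCovBy (s t : MTerm) : Prop := MLt s t ∧ ∀ z, MLt s z → ¬ MLt z t

/-- Duplicative trees: white or black nodes with a list (forest) of children. -/
inductive DTree : Type
  | W : List DTree → DTree
  | B : List DTree → DTree

/-- The one-step relation `⋖` on duplicative forests. -/
inductive DStep : List DTree → List DTree → Prop
  | dup (g : List DTree) : DStep [DTree.W g] [DTree.B (g ++ g)]
  | white {g g' : List DTree} : DStep g g' → DStep [DTree.W g] [DTree.W g']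
  | black {g g' : List DTree} : DStep g g' → DStep [DTree.B g] [DTree.B g']
  | head {t t' : DTree} (f : List DTree) : DStep [t] [t'] → DStep (t :: f) (t' :: f)
  | tail (t : DTree) {f f' : List DTree} : DStep f f' → DStep (t :: f) (t :: f')

/-- `≪`, the reflexive-transitive closure of `⋖`. -/
def DLe : List DTree → List DTree → Prop := Relation.ReflTransGen DStep

/-- The map `fr` from Mockingbird terms to duplicative forests. -/
def fr : MTerm → List DTree
  | MTerm.M => []
  | MTerm.var _ => []
  | MTerm.app MTerm.M MTerm.M => [DTree.B []]
  | MTerm.app MTerm.M t' => [DTree.W (fr t')]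
  | MTerm.app t t' => [DTree.B (fr t ++ fr t')]

mutual
  /-- The pruning map on duplicative trees (returns a forest). -/
  def prT : DTree → List DTree
    | DTree.W g => [DTree.W (prF g)]
    | DTree.B g => prF g
  /-- The pruning map on duplicative forests. -/
  def prF : List DTree → List DTree
    | [] => []
    | t :: f => prT t ++ prF f
end

mutual
  /-- The statistic `mtStat` on duplicative trees. -/
  def mtStat : DTree → ℕ
    | DTree.W g => 2 * ml g
    | DTree.B g => ml g
  /-- Sum of `mtStat` over the trees of a forest. -/
  def mtsum : List DTree → ℕ
    | [] => 0
    | t :: f => mtStat t + mtsum f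
  /-- The statistic `ml` on duplicative forests: `1 - ℓ + Σ mtStat`. -/
  def ml : List DTree → ℕ
    | f => mtsum f + 1 - f.length
end

mutual
  /-- Number of white nodes in a duplicative tree. -/
  def whitesT : DTree → ℕ
    | DTree.W g => 1 + whitesF g
    | DTree.B g => whitesF g
  /-- Number of white nodes in a duplicative forest. -/
  def whitesF : List DTree → ℕ
    | [] => 0
    | t :: f => whitesT t + whitesF f
end

/-- Closed terms: no variables. -/
def MClosed : MTerm → Prop
  | MTerm.M => True
  | MTerm.var _ => False
  | MTerm.app a b => MClosed a ∧ MClosed b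

/-- Degree: number of applications. -/
def deg : MTerm → ℕ
  | MTerm.M => 0
  | MTerm.var _ => 0
  | MTerm.app a b => deg a + deg b + 1

/-- Subterm relation. -/
inductive Subterm : MTerm → MTerm → Prop
  | refl (t : MTerm) : Subterm t t
  | left {s a : MTerm} (b : MTerm) : Subterm s a → Subterm s (MTerm.app a b)
  | right (a : MTerm) {s b : MTerm} : Subterm s b → Subterm s (MTerm.app a b)

/-- The term `r_d`. -/
def rTerm : ℕ → MTerm
  | 0 => MTerm.M
  | d + 1 => MTerm.app MTerm.M (rTerm d)

/-- Saturated chain from `a` to `b`, given as the list of its elements. -/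
def SatChain (a b : MTerm) (c : List MTerm) : Prop :=
  List.Chain' MCovBy c ∧ c.head? = some a ∧ c.getLast? = some b

/-!
Nothing rewrites `M` or `x_i`, and nothing rewrites to `M`. So along a rewrite sequence from
`t1 ⋆ t2` the term stays an application whose components evolve independently, until the head
becomes `M`; this forces `t1 = M`, and after the step `M ⋆ u ⇒ u ⋆ u` both components are
reducts of `t2`.
-/

namespace MTerm

lemma not_step_M (v : MTerm) : ¬ Step M v := nofun

lemma not_step_var (i : ℕ) (v : MTerm) : ¬ Step (var i) v := nofun

lemma not_step_to_M (u : MTerm) : ¬ Step u M := nofun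

lemma eq_of_M_mle {v : MTerm} (h : MLe M v) : v = M :=
  (Relation.reflTransGen_iff_eq not_step_M).1 h

lemma eq_of_var_mle {i : ℕ} {v : MTerm} (h : MLe (var i) v) : v = var i :=
  (Relation.reflTransGen_iff_eq (not_step_var i)).1 h

lemma eq_of_mle_M {u : MTerm} (h : MLe u M) : u = M := by
  rcases h.cases_tail with rfl | ⟨w, -, hw⟩
  · rfl
  · exact absurd hw (not_step_to_M w)

lemma mle_app {a a' b b' : MTerm} (ha : MLe a a') (hb : MLe b b') :
    MLe (app a b) (app a' b') :=
  (ha.lift (app · b) fun _ _ => Step.left b).trans (hb.lift (app a') fun _ _ => Step.right a')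

lemma exists_of_app_mle {a b v : MTerm} (h : MLe (app a b) v) :
    ∃ a' b', v = app a' b' ∧
      ((MLe a a' ∧ MLe b b') ∨ (a = M ∧ MLe b a' ∧ MLe b b')) := by
  induction h with
  | refl => exact ⟨a, b, rfl, .inl ⟨.refl, .refl⟩⟩
  | tail _ hs ih =>
    obtain ⟨a', b', rfl, ⟨ha, hb⟩ | ⟨rfl, ha, hb⟩⟩ := ih
    · cases hs with
      | mock => exact ⟨b', b', rfl, .inr ⟨eq_of_mle_M ha, hb, hb⟩⟩
      | left _ hs => exact ⟨_, b', rfl, .inl ⟨ha.tail hs, hb⟩⟩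
      | right _ hs => exact ⟨a', _, rfl, .inl ⟨ha, hb.tail hs⟩⟩
    · cases hs with
      | mock => exact ⟨b', b', rfl, .inr ⟨rfl, hb, hb⟩⟩
      | left _ hs => exact ⟨_, b', rfl, .inr ⟨rfl, ha.tail hs, hb⟩⟩
      | right _ hs => exact ⟨a', _, rfl, .inr ⟨rfl, ha, hb.tail hs⟩⟩

end MTerm

/-- recursive description of `≼` on Mockingbird terms. -/
theorem mockingbird_le_iff (t t' : MTerm) :
    MLe t t' ↔
      (t = MTerm.M ∧ t' = MTerm.M) ∨
      (∃ i, t = MTerm.var i ∧ t' = MTerm.var i) ∨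
      (∃ t1 t2 t1' t2', t = MTerm.app t1 t2 ∧ t' = MTerm.app t1' t2' ∧
        MLe t1 t1' ∧ MLe t2 t2') ∨
      (∃ t2 t1' t2', t = MTerm.app MTerm.M t2 ∧ t' = MTerm.app t1' t2' ∧
        MLe t2 t1' ∧ MLe t2 t2') := by
  constructor
  · intro h
    cases t with
    | M => exact .inl ⟨rfl, MTerm.eq_of_M_mle h⟩
    | var i => exact .inr (.inl ⟨i, rfl, MTerm.eq_of_var_mle h⟩)
    | app a b =>
      obtain ⟨a', b', rfl, ⟨ha, hb⟩ | ⟨rfl, ha, hb⟩⟩ := MTerm.exists_of_app_mle h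
      · exact .inr (.inr (.inl ⟨a, b, a', b', rfl, rfl, ha, hb⟩))
      · exact .inr (.inr (.inr ⟨b, a', b', rfl, rfl, ha, hb⟩))
  · rintro (⟨rfl, rfl⟩ | ⟨i, rfl, rfl⟩ | ⟨a, b, a', b', rfl, rfl, ha, hb⟩ |
      ⟨b, a', b', rfl, rfl, ha, hb⟩)
    · exact .refl
    · exact .refl
    · exact MTerm.mle_app ha hb
    · exact .head (Step.mock b) (MTerm.mle_app ha hb)
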